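/- If a conjugacy φ : X₁ → X₂ between one-sided shift spaces exists (a homeomorphism with φ∘σ_{X₁} = σ_{X₂}∘φ), then the *-isomorphism Φ : l∞(X₁) → l∞(X₂) given by Φ(f) = f∘φ⁻¹ satisfies Φ(C(X₁)) = C(X₂), Φ∘α_{X₁} = α_{X₂}∘Φ, Φ∘L_{X₁} = L_{X₂}∘Φ, and Φ(D_{X₁}) = D_{X₂}. -/

import Mathlib

open scoped ENNReal
open Classical
set_option linter.unusedSectionVars false
set_option synthInstance.maxHeartbeats 1000000
set_option maxHeartbeats 1000000

noncomputable section

variable {𝔞 : Type*} [Fintype 𝔞] [Nonempty 𝔞] [TopologicalSpace 𝔞] [DiscreteTopology 𝔞]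

/-- The one-sided shift map on the full one-sided shift `𝔞^ℕ`. -/
def shift (x : ℕ → 𝔞) : ℕ → 𝔞 := fun n => x (n + 1)

/-- Concatenation `u x` of a finite word `u` with an infinite sequence `x`. -/
def wcat (u : List 𝔞) (x : ℕ → 𝔞) : ℕ → 𝔞 := fun n =>
  if h : n < u.length then u.get ⟨n, h⟩ else x (n - u.length)

/-- `l∞(X)`: the C*-algebra of bounded complex-valued functions on `X`,
with pointwise operations and the supremum norm. -/
abbrev Linf (X : Set (ℕ → 𝔞)) : Type _ := lp (fun _ : X => ℂ) ∞

/-- The set `C(u,v) = {vx : x ∈ X, vx ∈ X, ux ∈ X}`. -/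
def cyl (X : Set (ℕ → 𝔞)) (u v : List 𝔞) : Set (ℕ → 𝔞) :=
  {y | ∃ x, x ∈ X ∧ wcat u x ∈ X ∧ wcat v x ∈ X ∧ y = wcat v x}

/-- The indicator function of a subset `S`, as an element of `l∞(X)`. -/
def chi (X S : Set (ℕ → 𝔞)) : Linf X :=
  ⟨fun x => S.indicator (fun _ => (1 : ℂ)) (x : ℕ → 𝔞),
    memℓp_infty ⟨1, by
      rintro r ⟨x, rfl⟩
      by_cases h : (x : ℕ → 𝔞) ∈ S <;> simp [Set.indicator_apply, h]⟩⟩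

/-- `D_X`: the smallest C*-subalgebra (norm-closed, star-closed subalgebra) of `l∞(X)`
containing the indicator functions `χ_{C(u,v)}` for all words `u, v`. -/
def Dalg (X : Set (ℕ → 𝔞)) : NonUnitalStarSubalgebra ℂ (Linf X) :=
  (NonUnitalStarAlgebra.adjoin ℂ
    {f : Linf X | ∃ u v : List 𝔞, f = chi X (cyl X u v)}).topologicalClosure

lemma chi_cyl_mem_Dalg (X : Set (ℕ → 𝔞)) (u v : List 𝔞) : chi X (cyl X u v) ∈ Dalg X :=
  (NonUnitalStarAlgebra.adjoin ℂ _).le_topologicalClosure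
    (NonUnitalStarAlgebra.subset_adjoin ℂ _ ⟨u, v, rfl⟩)

/-- The map `α : l∞(X) → l∞(X)`, `α(f)(x) = f(σ x)`. -/
def alphaMap (X : Set (ℕ → 𝔞)) (hX : ∀ x ∈ X, shift x ∈ X) (f : Linf X) : Linf X :=
  ⟨fun x => f ⟨shift (x : ℕ → 𝔞), hX _ x.2⟩,
    memℓp_infty ⟨‖f‖, by
      rintro r ⟨x, rfl⟩
      exact lp.norm_apply_le_norm ENNReal.top_ne_zero f _⟩⟩

/-- The set `σ⁻¹({x})` of preimages of `x` in `X` under the shift. -/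
def preims (X : Set (ℕ → 𝔞)) (x : ℕ → 𝔞) : Set X :=
  {y : X | shift (y : ℕ → 𝔞) = x}

lemma preims_finite (X : Set (ℕ → 𝔞)) (x : ℕ → 𝔞) : (preims X x).Finite := by
  apply Set.Finite.of_finite_image (f := fun y : X => (y : ℕ → 𝔞) 0) (Set.toFinite _)
  intro y hy z hz h
  apply Subtype.ext
  funext n
  cases n with
  | zero => exact h
  | succ m =>
    have hy' : shift (y : ℕ → 𝔞) = x := hy
    have hz' : shift (z : ℕ → 𝔞) = x := hz
    exact congrFun (hy'.trans hz'.symm) m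

lemma aux_norm_le (X : Set (ℕ → 𝔞)) (f : Linf X) (S : Set X) (hS : S.Finite) :
    ‖((S.ncard : ℂ))⁻¹ * ∑ᶠ y ∈ S, f y‖ ≤ ‖f‖ := by
  rw [finsum_mem_eq_finite_toFinset_sum _ hS]
  have hcard : S.ncard = hS.toFinset.card := Set.ncard_eq_toFinset_card _ hS
  rcases Nat.eq_zero_or_pos hS.toFinset.card with h0 | hpos
  · have he : hS.toFinset = ∅ := Finset.card_eq_zero.mp h0
    rw [he]
    simp only [Finset.sum_empty, mul_zero, norm_zero]
    exact norm_nonneg f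
  · have hb : ‖∑ y ∈ hS.toFinset, (f : ∀ _ : X, ℂ) y‖ ≤ (hS.toFinset.card : ℝ) * ‖f‖ := by
      calc ‖∑ y ∈ hS.toFinset, (f : ∀ _ : X, ℂ) y‖ ≤ ∑ y ∈ hS.toFinset, ‖(f : ∀ _ : X, ℂ) y‖ :=
            norm_sum_le _ _
      _ ≤ hS.toFinset.card • ‖f‖ := Finset.sum_le_card_nsmul _ _ _
            (fun y _ => lp.norm_apply_le_norm ENNReal.top_ne_zero f y)
      _ = (hS.toFinset.card : ℝ) * ‖f‖ := nsmul_eq_mul _ _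
    have hno : ‖((S.ncard : ℂ))⁻¹‖ = ((hS.toFinset.card : ℝ))⁻¹ := by
      rw [norm_inv, hcard]
      norm_num
    calc ‖((S.ncard : ℂ))⁻¹ * ∑ y ∈ hS.toFinset, (f : ∀ _ : X, ℂ) y‖
        = ((hS.toFinset.card : ℝ))⁻¹ * ‖∑ y ∈ hS.toFinset, (f : ∀ _ : X, ℂ) y‖ := by
          rw [norm_mul, hno]
    _ ≤ ((hS.toFinset.card : ℝ))⁻¹ * ((hS.toFinset.card : ℝ) * ‖f‖) := by
          apply mul_le_mul_of_nonneg_left hb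
          positivity
    _ = ‖f‖ := by
          rw [← mul_assoc, inv_mul_cancel₀ (by positivity), one_mul]

/-- The transfer operator `L : l∞(X) → l∞(X)`:
`L(f)(x)` is the average of `f` over `σ⁻¹({x})` if `x ∈ σ(X)`, and `0` otherwise. -/
def Lmap (X : Set (ℕ → 𝔞)) (f : Linf X) : Linf X :=
  ⟨fun x => if (x : ℕ → 𝔞) ∈ shift '' X then
      (((preims X (x : ℕ → 𝔞)).ncard : ℂ))⁻¹ * ∑ᶠ y ∈ preims X (x : ℕ → 𝔞), f y
    else 0,
    memℓp_infty ⟨‖f‖, by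
      rintro r ⟨x, rfl⟩
      dsimp only
      split_ifs with h
      · exact aux_norm_le X f _ (preims_finite X _)
      · rw [norm_zero]; exact norm_nonneg f⟩⟩

/-- Transport of bounded functions along a homeomorphism: `Φ(f) = f ∘ φ⁻¹`. -/
def transport {𝔟 : Type*} [TopologicalSpace 𝔟] {X : Set (ℕ → 𝔞)} {Y : Set (ℕ → 𝔟)}
    (e : X ≃ₜ Y) (f : Linf X) : Linf Y :=
  ⟨fun y => f (e.symm y),
    memℓp_infty ⟨‖f‖, by
      rintro r ⟨y, rfl⟩
      exact lp.norm_apply_le_norm ENNReal.top_ne_zero f _⟩⟩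


/-!
The transport `Φ f = f ∘ φ⁻¹` is a *-isomorphism of `l∞` that does not increase norms. It preserves
continuity because `φ` is a homeomorphism, and it intertwines `α` and `L` because `φ` maps each
fibre `σ⁻¹{x}` bijectively onto `σ⁻¹{φ x}`.

For `D`, it suffices (by continuity, and by symmetry for `φ⁻¹`) that `Φ` maps every generator
`χ_{C(u,v)}` into `D_{X₂}`. Write `C(u,v) = C(ε,v) ∩ σ^{-|v|} C(u,ε)` and
`C(u,ε) = σ^{|u|} C(ε,u)`. The set `φ(C(ε,w))` is clopen in the compact space `X₂`, hence a finite
union of cylinders `C(ε,a)` with all `|a| = N`, for any large enough `N`; and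
`σ^k C(ε,a) = C(a, a_{[k,N)})` for `k ≤ N`. Finally, `D_X` is closed under finite unions of
cylinders and under `α`, since `α χ_S = χ_{σ⁻¹ S}` and `σ⁻¹ C(u,v) = ⋃_b C(u, b v)` within `X`.
-/

open Set Function

section Words

variable {α : Type*} {X : Set (ℕ → α)}

lemma shift_iterate_apply (x : ℕ → α) (k n : ℕ) : shift^[k] x n = x (n + k) := by
  induction k generalizing x with
  | zero => rfl
  | succ k ih => rw [iterate_succ_apply, ih]; rfl

lemma wcat_nil (x : ℕ → α) : wcat [] x = x := by
  funext n; simp [wcat]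

lemma wcat_cons_succ (b : α) (v : List α) (x : ℕ → α) (n : ℕ) :
    wcat (b :: v) x (n + 1) = wcat v x n := by
  simp [wcat]

lemma shift_iterate_wcat {w : List α} {k : ℕ} (hk : k ≤ w.length) (x : ℕ → α) :
    shift^[k] (wcat w x) = wcat (w.drop k) x := by
  funext n
  simp only [shift_iterate_apply, wcat, List.length_drop, List.get_eq_getElem, List.getElem_drop]
  split_ifs <;> (try congr 1) <;> omega

lemma shift_iterate_length_wcat (w : List α) (x : ℕ → α) : shift^[w.length] (wcat w x) = x := by
  rw [shift_iterate_wcat le_rfl, List.drop_length, wcat_nil]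

lemma wcat_shift_iterate_of_prefix {w : List α} {z : ℕ → α}
    (h : ∀ i (hi : i < w.length), z i = w[i]) : wcat w (shift^[w.length] z) = z := by
  funext n
  by_cases hn : n < w.length
  · simp [wcat, hn, h n hn]
  · simp only [wcat, hn, dite_false, shift_iterate_apply]
    congr 1; omega

lemma mem_cyl_nil_iff (hX : MapsTo shift X X) {w : List α} {z : ℕ → α} :
    z ∈ cyl X [] w ↔ z ∈ X ∧ ∀ i (hi : i < w.length), z i = w[i] := by
  constructor
  · rintro ⟨x, -, -, hwx, rfl⟩
    exact ⟨hwx, fun i hi => by simp [wcat, hi]⟩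
  · rintro ⟨hz, hpre⟩
    have hzx := wcat_shift_iterate_of_prefix hpre
    have hx : shift^[w.length] z ∈ X := hX.iterate _ hz
    exact ⟨_, hx, by rwa [wcat_nil], by rwa [hzx], hzx.symm⟩

lemma cyl_subset (u v : List α) : cyl X u v ⊆ X := by
  rintro _ ⟨x, -, -, hvx, rfl⟩
  exact hvx

lemma cyl_eq_inter_preimage (u v : List α) :
    cyl X u v = cyl X [] v ∩ shift^[v.length] ⁻¹' cyl X u [] := by
  ext y
  constructor
  · rintro ⟨x, hx, hux, hvx, rfl⟩
    refine ⟨⟨x, hx, by rwa [wcat_nil], hvx, rfl⟩, x, hx, hux, by rwa [wcat_nil], ?_⟩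
    rw [shift_iterate_length_wcat, wcat_nil]
  · rintro ⟨⟨x, hx, -, hvx, rfl⟩, x', -, hux', -, hxx'⟩
    rw [shift_iterate_length_wcat, wcat_nil] at hxx'
    exact ⟨x, hx, hxx' ▸ hux', hvx, rfl⟩

lemma image_shift_iterate_cyl_nil (hX : MapsTo shift X X) {w : List α} {k : ℕ}
    (hk : k ≤ w.length) : shift^[k] '' cyl X [] w = cyl X w (w.drop k) := by
  ext z
  constructor
  · rintro ⟨_, ⟨x, hx, -, hwx, rfl⟩, rfl⟩
    refine ⟨x, hx, hwx, ?_, shift_iterate_wcat hk x⟩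
    rw [← shift_iterate_wcat hk]
    exact hX.iterate k hwx
  · rintro ⟨x, hx, hwx, -, rfl⟩
    exact ⟨wcat w x, ⟨x, hx, by rwa [wcat_nil], hwx, rfl⟩, shift_iterate_wcat hk x⟩

lemma shift_mem_cyl_iff (hX : MapsTo shift X X) {u v : List α} {y : ℕ → α} (hy : y ∈ X) :
    shift y ∈ cyl X u v ↔ ∃ b, y ∈ cyl X u (b :: v) := by
  constructor
  · rintro ⟨x, hx, hux, hvx, hyx⟩
    have hy' : wcat (y 0 :: v) x = y := by
      funext n
      cases n with
      | zero => rfl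
      | succ n => rw [wcat_cons_succ, ← hyx]; rfl
    exact ⟨y 0, x, hx, hux, hy'.symm ▸ hy, hy'.symm⟩
  · rintro ⟨b, x, hx, hux, hbvx, rfl⟩
    have hshift : shift (wcat (b :: v) x) = wcat v x := funext (wcat_cons_succ b v x)
    exact ⟨x, hx, hux, hshift ▸ hX hbvx, hshift⟩

lemma mem_cyl_nil_ofFn_iff (hX : MapsTo shift X X) {N : ℕ} (a : Fin N → α) (z : ℕ → α) :
    z ∈ cyl X [] (List.ofFn a) ↔ z ∈ X ∧ ∀ i : Fin N, z i = a i := by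
  rw [mem_cyl_nil_iff hX]
  simp only [List.length_ofFn, List.getElem_ofFn]
  exact and_congr_right fun _ => ⟨fun h i => h i i.2, fun h i hi => h ⟨i, hi⟩⟩

end Words

section Topology

variable {α : Type*} [TopologicalSpace α] [DiscreteTopology α] {X : Set (ℕ → α)}

lemma isClopen_preimage_val_cyl_nil (hX : MapsTo shift X X) (w : List α) :
    IsClopen ((↑) ⁻¹' cyl X [] w : Set X) := by
  have heq : ((↑) ⁻¹' cyl X [] w : Set X) =
      ⋂ i : Fin w.length, (fun x : X => (x : ℕ → α) i) ⁻¹' {w[i]} := by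
    ext x
    simp only [mem_preimage, mem_iInter, mem_singleton_iff, mem_cyl_nil_iff hX, x.2, true_and]
    exact ⟨fun h i => h i i.2, fun h i hi => h ⟨i, hi⟩⟩
  rw [heq]
  exact isClopen_iInter_of_finite fun i =>
    (isClopen_discrete _).preimage ((continuous_apply _).comp continuous_subtype_val)

lemma IsCompact.exists_cylinder_subset {K U : Set (ℕ → α)} (hK : IsCompact K) (hU : IsOpen U)
    (hKU : K ⊆ U) : ∃ N, ∀ x ∈ K, PiNat.cylinder x N ⊆ U := by
  let _ := PiNat.metricSpace (E := fun _ : ℕ => α)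
  obtain ⟨δ, hδ, hsub⟩ := hK.exists_thickening_subset_open hU hKU
  obtain ⟨N, hN⟩ := exists_pow_lt_of_lt_one hδ one_half_lt_one
  exact ⟨N, fun x hx y hy => hsub (Metric.mem_thickening_iff.2
    ⟨x, hx, (PiNat.mem_cylinder_iff_dist_le.1 hy).trans_lt hN⟩)⟩

end Topology

section Decomposition

variable {β : Type*} [Fintype β] [TopologicalSpace β] [DiscreteTopology β] {Y : Set (ℕ → β)}

lemma exists_finset_eq_biUnion_cyl_nil (hYc : IsClosed Y) (hY : MapsTo shift Y Y)
    {S : Set (ℕ → β)} (hSY : S ⊆ Y) (hS : IsClopen ((↑) ⁻¹' S : Set Y)) (n : ℕ) :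
    ∃ N, n ≤ N ∧ ∃ A : Finset (Fin N → β), S = ⋃ a ∈ A, cyl Y [] (List.ofFn a) := by
  have hSc : IsCompact S := by
    have := hS.isClosed.trans hYc
    rw [Subtype.image_preimage_coe, inter_eq_right.2 hSY] at this
    exact this.isCompact
  obtain ⟨U, hU, hUS⟩ := isOpen_induced_iff.1 hS.isOpen
  have hSU : S ⊆ U := fun y hy => show (⟨y, hSY hy⟩ : Y) ∈ (↑) ⁻¹' U from hUS ▸ hy
  obtain ⟨N₀, hN₀⟩ := hSc.exists_cylinder_subset hU hSU
  set N := max n N₀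
  have hprefix : ∀ y ∈ S, ∀ z ∈ Y, (∀ i : Fin N, z i = y i) → z ∈ S := fun y hy z hzY hzy =>
    show (⟨z, hzY⟩ : Y) ∈ (↑) ⁻¹' S from
      hUS ▸ hN₀ y hy fun i hi => hzy ⟨i, hi.trans_le (le_max_right _ _)⟩
  refine ⟨N, le_max_left _ _, Finset.univ.filter fun a => cyl Y [] (List.ofFn a) ⊆ S,
    Subset.antisymm (fun y hy => mem_iUnion₂.2 ⟨fun i => y i, ?_, ?_⟩)
      (iUnion₂_subset fun a ha => (Finset.mem_filter.1 ha).2)⟩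
  · refine Finset.mem_filter.2 ⟨Finset.mem_univ _, fun z hz => ?_⟩
    obtain ⟨hzY, hzy⟩ := (mem_cyl_nil_ofFn_iff hY _ _).1 hz
    exact hprefix y hy z hzY hzy
  · exact (mem_cyl_nil_ofFn_iff hY _ _).2 ⟨hSY hy, fun _ => rfl⟩

end Decomposition

section Indicator

variable {α : Type*} {X : Set (ℕ → α)}

lemma chi_apply (S : Set (ℕ → α)) (x : X) : chi X S x = S.indicator 1 x := rfl

lemma chi_congr {S T : Set (ℕ → α)} (h : ∀ x ∈ X, x ∈ S ↔ x ∈ T) : chi X S = chi X T := by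
  refine lp.ext (funext fun x => ?_)
  simp only [chi_apply, indicator_apply, h x x.2]

lemma chi_empty : chi X (∅ : Set (ℕ → α)) = 0 :=
  lp.ext (funext fun x => by simp [chi_apply])

lemma chi_inter (S T : Set (ℕ → α)) : chi X (S ∩ T) = chi X S * chi X T := by
  refine lp.ext (funext fun x => ?_)
  rw [lp.infty_coeFn_mul]
  by_cases hS : (x : ℕ → α) ∈ S <;> by_cases hT : (x : ℕ → α) ∈ T <;>
    simp [chi_apply, hS, hT]

lemma chi_union (S T : Set (ℕ → α)) :
    chi X (S ∪ T) = chi X S + chi X T - chi X S * chi X T := by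
  refine lp.ext (funext fun x => ?_)
  rw [lp.coeFn_sub, lp.coeFn_add, lp.infty_coeFn_mul]
  by_cases hS : (x : ℕ → α) ∈ S <;> by_cases hT : (x : ℕ → α) ∈ T <;>
    simp [chi_apply, hS, hT]

lemma chi_biUnion_cyl_mem_Dalg {ι : Type*} (A : Finset ι) (u v : ι → List α) :
    chi X (⋃ i ∈ A, cyl X (u i) (v i)) ∈ Dalg X := by
  induction A using Finset.induction_on with
  | empty => simp [chi_empty, zero_mem]
  | insert i A _ hA =>
    rw [Finset.set_biUnion_insert, chi_union]
    have hi : chi X (cyl X (u i) (v i)) ∈ Dalg X :=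
      (NonUnitalStarAlgebra.adjoin ℂ _).le_topologicalClosure
        (NonUnitalStarAlgebra.subset_adjoin ℂ _ ⟨u i, v i, rfl⟩)
    exact sub_mem (add_mem hi hA) (mul_mem hi hA)

end Indicator

section Homomorphisms

variable {α β : Type*} {X : Set (ℕ → α)} {Y : Set (ℕ → β)}

lemma norm_le_of_forall_apply_eq {f : Linf X} {g : Linf Y} (p : Y → X) (h : ∀ y, g y = f (p y)) :
    ‖g‖ ≤ ‖f‖ :=
  lp.norm_le_of_forall_le (norm_nonneg f) fun y =>
    h y ▸ lp.norm_apply_le_norm ENNReal.top_ne_zero f (p y)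

lemma mapsTo_Dalg {F : Type*} [FunLike F (Linf X) (Linf Y)]
    [NonUnitalAlgHomClass F ℂ (Linf X) (Linf Y)] [StarHomClass F (Linf X) (Linf Y)]
    (Ψ : F) (hΨ : Continuous Ψ) (hgen : ∀ u v, Ψ (chi X (cyl X u v)) ∈ Dalg Y) :
    MapsTo Ψ (Dalg X) (Dalg Y) := fun _ hf =>
  NonUnitalStarSubalgebra.topologicalClosure_minimal (t := (Dalg Y).comap Ψ) _
    (NonUnitalStarAlgebra.adjoin_le (by rintro _ ⟨u, v, rfl⟩; exact hgen u v))
    ((NonUnitalStarAlgebra.adjoin ℂ _).isClosed_topologicalClosure.preimage hΨ) hf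

def alphaHom (hX : MapsTo shift X X) : Linf X →⋆ₙₐ[ℂ] Linf X where
  toFun := alphaMap X hX
  map_smul' _ _ := rfl
  map_zero' := rfl
  map_add' _ _ := rfl
  map_mul' _ _ := rfl
  map_star' _ := rfl

lemma alphaMap_chi (hX : MapsTo shift X X) (S : Set (ℕ → α)) :
    alphaMap X hX (chi X S) = chi X (shift ⁻¹' S) := rfl

lemma alphaMap_iterate_chi (hX : MapsTo shift X X) (k : ℕ) (S : Set (ℕ → α)) :
    (alphaMap X hX)^[k] (chi X S) = chi X (shift^[k] ⁻¹' S) := by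
  rw [preimage_iterate_eq]
  exact (Semiconj.iterate_right (f := chi X) (fun T => (alphaMap_chi hX T).symm) k S).symm

lemma mapsTo_alphaMap_Dalg [Fintype α] (hX : MapsTo shift X X) :
    MapsTo (alphaMap X hX) (Dalg X) (Dalg X) := by
  refine mapsTo_Dalg (alphaHom hX)
    (AddMonoidHomClass.continuous_of_bound _ 1 fun f => by
      rw [one_mul]; exact norm_le_of_forall_apply_eq _ fun _ => rfl) fun u v => ?_
  change alphaMap X hX _ ∈ _
  rw [alphaMap_chi, chi_congr (T := ⋃ b ∈ Finset.univ, cyl X u (b :: v)) fun y hy => by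
    simp [shift_mem_cyl_iff hX hy]]
  exact chi_biUnion_cyl_mem_Dalg _ (fun _ => u) (· :: v)

end Homomorphisms

section Transport

variable {α β : Type*} [TopologicalSpace α] [TopologicalSpace β]
  {X : Set (ℕ → α)} {Y : Set (ℕ → β)} (e : X ≃ₜ Y)

lemma transport_apply (f : Linf X) (y : Y) : transport e f y = f (e.symm y) := rfl

lemma transport_transport_symm (g : Linf Y) : transport e (transport e.symm g) = g :=
  lp.ext (funext fun y => congrArg g (e.apply_symm_apply y))

def transportStarAlgEquiv : Linf X ≃⋆ₐ[ℂ] Linf Y where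
  toFun := transport e
  invFun := transport e.symm
  left_inv := transport_transport_symm e.symm
  right_inv := transport_transport_symm e
  map_add' _ _ := rfl
  map_mul' _ _ := rfl
  map_star' _ := rfl
  map_smul' _ _ := rfl

lemma transport_mul (f g : Linf X) : transport e (f * g) = transport e f * transport e g :=
  map_mul (transportStarAlgEquiv e) f g

lemma continuous_transport : Continuous (transport e) :=
  AddMonoidHomClass.continuous_of_bound (transportStarAlgEquiv e) 1 fun f => by
    rw [one_mul]; exact norm_le_of_forall_apply_eq _ fun _ => rfl

lemma transport_image_setOf_continuous :
    transport e '' {f : Linf X | Continuous fun x : X => f x}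
      = {g : Linf Y | Continuous fun y : Y => g y} := by
  ext g
  constructor
  · rintro ⟨f, hf, rfl⟩
    exact hf.comp e.symm.continuous
  · intro hg
    exact ⟨transport e.symm g, hg.comp e.symm.symm.continuous, transport_transport_symm e g⟩

def transportSet (S : Set (ℕ → α)) : Set (ℕ → β) :=
  (↑) '' (e '' ((↑) ⁻¹' S))

lemma transportSet_subset (S : Set (ℕ → α)) : transportSet e S ⊆ Y :=
  image_subset_iff.2 fun y _ => y.2

lemma mem_transportSet_iff (S : Set (ℕ → α)) (y : Y) :
    (y : ℕ → β) ∈ transportSet e S ↔ (e.symm y : ℕ → α) ∈ S := by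
  rw [transportSet, Subtype.val_injective.mem_set_image, e.image_eq_preimage_symm]
  rfl

lemma preimage_val_transportSet (S : Set (ℕ → α)) :
    ((↑) ⁻¹' transportSet e S : Set Y) = e.symm ⁻¹' ((↑) ⁻¹' S) :=
  ext (mem_transportSet_iff e S)

lemma transport_chi (S : Set (ℕ → α)) : transport e (chi X S) = chi Y (transportSet e S) := by
  refine lp.ext (funext fun y => ?_)
  simp only [transport_apply, chi_apply, indicator_apply, mem_transportSet_iff, Pi.one_apply]

end Transport

section Conjugacy

variable {α β : Type*} [TopologicalSpace α] [TopologicalSpace β]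
  {X : Set (ℕ → α)} {Y : Set (ℕ → β)} {e : X ≃ₜ Y}
  {hX : MapsTo shift X X} {hY : MapsTo shift Y Y}

lemma coe_restrict_shift_iterate (hX : MapsTo shift X X) (k : ℕ) (x : X) :
    ((hX.restrict shift X X)^[k] x : ℕ → α) = shift^[k] x := by
  rw [hX.iterate_restrict]; rfl

lemma transport_alphaMap (hσ : Semiconj e (hX.restrict shift X X) (hY.restrict shift Y Y))
    (f : Linf X) : transport e (alphaMap X hX f) = alphaMap Y hY (transport e f) :=
  lp.ext (funext fun y =>
    congrArg f (hσ.inverse_left e.symm_apply_apply e.apply_symm_apply y).symm)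

lemma image_shift_iterate_transportSet
    (hσ : Semiconj e (hX.restrict shift X X) (hY.restrict shift Y Y))
    {S : Set (ℕ → α)} (hSX : S ⊆ X) (k : ℕ) :
    shift^[k] '' transportSet e S = transportSet e (shift^[k] '' S) := by
  have hσk := hσ.iterate_right k
  ext z
  constructor
  · rintro ⟨_, ⟨_, ⟨x, hx, rfl⟩, rfl⟩, rfl⟩
    rw [← coe_restrict_shift_iterate hY, mem_transportSet_iff, ← hσk, e.symm_apply_apply,
      coe_restrict_shift_iterate]
    exact mem_image_of_mem _ hx
  · rintro ⟨_, ⟨x, hx, rfl⟩, rfl⟩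
    obtain ⟨s, hs, hsx⟩ := hx
    refine ⟨e ⟨s, hSX hs⟩, (mem_transportSet_iff e S _).2 (by rwa [e.symm_apply_apply]), ?_⟩
    rw [← coe_restrict_shift_iterate hY, ← hσk]
    congr 2
    exact Subtype.ext ((coe_restrict_shift_iterate hX k _).trans hsx)

lemma mem_image_shift_iff_preims_nonempty {Z : Set (ℕ → α)} {c : ℕ → α} :
    c ∈ shift '' Z ↔ (preims Z c).Nonempty :=
  ⟨fun ⟨z, hz, h⟩ => ⟨⟨z, hz⟩, h⟩, fun ⟨z, hz⟩ => ⟨z, z.2, hz⟩⟩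

lemma preims_eq_image (hσ : Semiconj e (hX.restrict shift X X) (hY.restrict shift Y Y)) (y : Y) :
    preims Y y = e '' preims X (e.symm y) := by
  rw [e.image_eq_preimage_symm]
  ext z
  calc shift (z : ℕ → β) = y ↔ hY.restrict shift Y Y z = y :=
      ⟨fun h => Subtype.ext h, congrArg Subtype.val⟩
    _ ↔ e.symm (hY.restrict shift Y Y z) = e.symm y := e.symm.injective.eq_iff.symm
    _ ↔ hX.restrict shift X X (e.symm z) = e.symm y := by
      rw [hσ.inverse_left e.symm_apply_apply e.apply_symm_apply]
    _ ↔ shift (e.symm z : ℕ → α) = e.symm y := ⟨congrArg Subtype.val, fun h => Subtype.ext h⟩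

end Conjugacy

section TransferOperator

variable {α β : Type*} [Fintype α] [Nonempty α] [TopologicalSpace α] [DiscreteTopology α]
  [Fintype β] [Nonempty β] [TopologicalSpace β] [DiscreteTopology β]
  {X : Set (ℕ → α)} {Y : Set (ℕ → β)} {e : X ≃ₜ Y} {hX : MapsTo shift X X} {hY : MapsTo shift Y Y}

lemma transport_Lmap (hσ : Semiconj e (hX.restrict shift X X) (hY.restrict shift Y Y))
    (f : Linf X) : transport e (Lmap X f) = Lmap Y (transport e f) := by
  refine lp.ext (funext fun y => ?_)
  have hpre := preims_eq_image hσ y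
  have hdom : (y : ℕ → β) ∈ shift '' Y ↔ (e.symm y : ℕ → α) ∈ shift '' X := by
    rw [mem_image_shift_iff_preims_nonempty, mem_image_shift_iff_preims_nonempty, hpre,
      image_nonempty]
  change (if _ then _ else _) = if _ then _ else _
  rw [hpre, ncard_image_of_injective _ e.injective, finsum_mem_image e.injective.injOn]
  simp only [transport_apply, e.symm_apply_apply]
  exact if_congr hdom.symm rfl rfl

end TransferOperator

section Diagonal

variable {α β : Type*} [TopologicalSpace α] [DiscreteTopology α]
  [Fintype β] [TopologicalSpace β] [DiscreteTopology β] {X : Set (ℕ → α)} {Y : Set (ℕ → β)}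

lemma exists_transportSet_cyl_nil_eq (e : X ≃ₜ Y) (hX : MapsTo shift X X) (hYc : IsClosed Y)
    (hY : MapsTo shift Y Y) (w : List α) (n : ℕ) :
    ∃ N, n ≤ N ∧ ∃ A : Finset (Fin N → β),
      transportSet e (cyl X [] w) = ⋃ a ∈ A, cyl Y [] (List.ofFn a) := by
  refine exists_finset_eq_biUnion_cyl_nil hYc hY (transportSet_subset e _) ?_ n
  rw [preimage_val_transportSet]
  exact (isClopen_preimage_val_cyl_nil hX w).preimage e.symm.continuous

lemma transport_chi_cyl_nil_mem_Dalg (e : X ≃ₜ Y) (hX : MapsTo shift X X) (hYc : IsClosed Y)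
    (hY : MapsTo shift Y Y) (w : List α) : transport e (chi X (cyl X [] w)) ∈ Dalg Y := by
  obtain ⟨N, -, A, hA⟩ := exists_transportSet_cyl_nil_eq e hX hYc hY w 0
  rw [transport_chi, hA]
  exact chi_biUnion_cyl_mem_Dalg A (fun _ => []) List.ofFn

lemma transport_chi_cyl_right_nil_mem_Dalg {e : X ≃ₜ Y} {hX : MapsTo shift X X}
    {hY : MapsTo shift Y Y} (hσ : Semiconj e (hX.restrict shift X X) (hY.restrict shift Y Y))
    (hYc : IsClosed Y) (u : List α) : transport e (chi X (cyl X u [])) ∈ Dalg Y := by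
  obtain ⟨N, hN, A, hA⟩ := exists_transportSet_cyl_nil_eq e hX hYc hY u u.length
  have hu : cyl X u [] = shift^[u.length] '' cyl X [] u := by
    rw [image_shift_iterate_cyl_nil hX le_rfl, List.drop_length]
  rw [transport_chi, hu, ← image_shift_iterate_transportSet hσ (cyl_subset [] u), hA,
    image_iUnion₂]
  have hdrop : ∀ a : Fin N → β, shift^[u.length] '' cyl Y [] (List.ofFn a)
      = cyl Y (List.ofFn a) ((List.ofFn a).drop u.length) := fun a =>
    image_shift_iterate_cyl_nil hY (by rwa [List.length_ofFn])
  simp only [hdrop]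
  exact chi_biUnion_cyl_mem_Dalg A List.ofFn fun a => (List.ofFn a).drop u.length

lemma transport_chi_cyl_mem_Dalg [Fintype α] {e : X ≃ₜ Y} {hX : MapsTo shift X X}
    {hY : MapsTo shift Y Y} (hσ : Semiconj e (hX.restrict shift X X) (hY.restrict shift Y Y))
    (hYc : IsClosed Y) (u v : List α) : transport e (chi X (cyl X u v)) ∈ Dalg Y := by
  rw [cyl_eq_inter_preimage, chi_inter, ← alphaMap_iterate_chi hX,
    transport_mul, Semiconj.iterate_right (transport_alphaMap hσ)]
  exact mul_mem (transport_chi_cyl_nil_mem_Dalg e hX hYc hY v)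
    ((mapsTo_alphaMap_Dalg hY).iterate _ (transport_chi_cyl_right_nil_mem_Dalg hσ hYc u))

lemma mapsTo_transport_Dalg [Fintype α] {e : X ≃ₜ Y} {hX : MapsTo shift X X}
    {hY : MapsTo shift Y Y} (hσ : Semiconj e (hX.restrict shift X X) (hY.restrict shift Y Y))
    (hYc : IsClosed Y) : MapsTo (transport e) (Dalg X) (Dalg Y) :=
  mapsTo_Dalg (transportStarAlgEquiv e) (continuous_transport e)
    (transport_chi_cyl_mem_Dalg hσ hYc)

end Diagonal

/-- if `φ : X₁ → X₂` is a conjugacy of one-sided shift spaces, then the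
*-isomorphism `Φ : l∞(X₁) → l∞(X₂)`, `Φ(f) = f ∘ φ⁻¹`, satisfies `Φ(C(X₁)) = C(X₂)`,
`Φ ∘ α_{X₁} = α_{X₂} ∘ Φ`, `Φ ∘ L_{X₁} = L_{X₂} ∘ Φ` and `Φ(D_{X₁}) = D_{X₂}`. -/
theorem conjugacy_transport {𝔟 : Type*} [Fintype 𝔟] [Nonempty 𝔟]
    [TopologicalSpace 𝔟] [DiscreteTopology 𝔟]
    (X₁ : Set (ℕ → 𝔞)) (hX₁closed : IsClosed X₁) (hX₁inv : ∀ x ∈ X₁, shift x ∈ X₁)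
    (X₂ : Set (ℕ → 𝔟)) (hX₂closed : IsClosed X₂) (hX₂inv : ∀ x ∈ X₂, shift x ∈ X₂)
    (e : X₁ ≃ₜ X₂)
    (hconj : ∀ x : X₁,
      ((e ⟨shift (x : ℕ → 𝔞), hX₁inv _ x.2⟩ : X₂) : ℕ → 𝔟) = shift ((e x : X₂) : ℕ → 𝔟)) :
    Function.Bijective (transport e) ∧
    (∀ f g : Linf X₁, transport e (f + g) = transport e f + transport e g) ∧
    (∀ (c : ℂ) (f : Linf X₁), transport e (c • f) = c • transport e f) ∧
    (∀ f g : Linf X₁, transport e (f * g) = transport e f * transport e g) ∧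
    (∀ f : Linf X₁, transport e (star f) = star (transport e f)) ∧
    transport e '' {f : Linf X₁ | Continuous fun x : X₁ => f x}
      = {g : Linf X₂ | Continuous fun y : X₂ => g y} ∧
    (∀ f : Linf X₁, transport e (alphaMap X₁ hX₁inv f) = alphaMap X₂ hX₂inv (transport e f)) ∧
    (∀ f : Linf X₁, transport e (Lmap X₁ f) = Lmap X₂ (transport e f)) ∧
    transport e '' (Dalg X₁ : Set (Linf X₁)) = (Dalg X₂ : Set (Linf X₂)) := by
  have hσ : Semiconj e (MapsTo.restrict shift X₁ X₁ hX₁inv) (MapsTo.restrict shift X₂ X₂ hX₂inv) :=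
    fun x => Subtype.ext (hconj x)
  have hσ' := hσ.inverse_left e.symm_apply_apply e.apply_symm_apply
  let Φ := transportStarAlgEquiv e
  refine ⟨Φ.bijective, map_add Φ, map_smul Φ, map_mul Φ, map_star Φ,
    transport_image_setOf_continuous e, transport_alphaMap hσ, transport_Lmap hσ, ?_⟩
  exact (mapsTo_transport_Dalg hσ hX₂closed).image_subset.antisymm fun g hg =>
    ⟨transport e.symm g, mapsTo_transport_Dalg hσ' hX₁closed hg, transport_transport_symm e g⟩
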